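/- arXiv:2406.02967 — 2 statements merged into one kernel-verified Lean document; each statement's English description precedes it below -/
import Mathlib

section
/- Let (A, B, H) be a finite-dimensional P-module and suppose a nonzero vector ξ ∈ H is contained in a ray p (i.e., ‖pₙξ‖ = ‖ξ‖ for all n). Then p is eventually periodic, and moreover p has a period of length at most dim(H). -/
open Filter Topology
open scoped InnerProductSpace

/-- Action of a finite binary word on a vector: digit `false` acts by `A`,
digit `true` by `B`, with the first digit acting first. -/
noncomputable def wordAct {H : Type*} [NormedAddCommGroup H] [InnerProductSpace ℂ H]
    (A B : H →L[ℂ] H) : List Bool → H → H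
  | [], ξ => ξ
  | b :: rest, ξ => wordAct A B rest ((if b then B else A) ξ)

/-- The length-`n` prefix of a ray `p : ℕ → Bool` as a list. -/
def pre (p : ℕ → Bool) (n : ℕ) : List Bool := List.ofFn fun i : Fin n => p i

/-- The Pythagorean equality `A*A + B*B = id`. -/
def IsPyth {H : Type*} [NormedAddCommGroup H] [InnerProductSpace ℂ H] [CompleteSpace H]
    (A B : H →L[ℂ] H) : Prop :=
  (ContinuousLinearMap.adjoint A).comp A + (ContinuousLinearMap.adjoint B).comp B =
    ContinuousLinearMap.id ℂ H

/-- `ξ` is a nonzero vector contained in the ray `p`. -/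
noncomputable def ContainedIn {H : Type*} [NormedAddCommGroup H] [InnerProductSpace ℂ H]
    (A B : H →L[ℂ] H) (p : ℕ → Bool) (ξ : H) : Prop :=
  ξ ≠ 0 ∧ ∀ n : ℕ, ‖wordAct A B (pre p n) ξ‖ = ‖ξ‖

/-!
Vectors contained in two different rays are orthogonal. Each is killed by the letter its ray
does not take, so the identity `⟪x, y⟫ = ⟪A x, A y⟫ + ⟪B x, B y⟫` carries their inner product
unchanged along the common prefix of the rays, and it vanishes at the first digit where they
differ. The `dim H + 1` nonzero vectors `pₐ ξ`, `a ≤ dim H`, are contained in the shifted rays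
`k ↦ p (a + k)`, so two of these shifts `a < b ≤ dim H` coincide and `b - a` is a period.
-/

section

variable {H : Type*} [NormedAddCommGroup H] [InnerProductSpace ℂ H]

lemma wordAct_append (A B : H →L[ℂ] H) (l l' : List Bool) (x : H) :
    wordAct A B (l ++ l') x = wordAct A B l' (wordAct A B l x) := by
  induction l generalizing x with
  | nil => rfl
  | cons b l ih => exact ih _

lemma pre_add (q : ℕ → Bool) (m n : ℕ) :
    pre q (m + n) = pre q m ++ pre (fun k => q (m + k)) n :=
  List.ofFn_add

@[simp]
lemma wordAct_pre_one (A B : H →L[ℂ] H) (q : ℕ → Bool) (x : H) :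
    wordAct A B (pre q 1) x = (if q 0 then B else A) x :=
  rfl

namespace IsPyth

variable [CompleteSpace H] {A B : H →L[ℂ] H}

lemma symm (h : IsPyth A B) : IsPyth B A := by
  unfold IsPyth at *
  rwa [add_comm]

lemma letter (h : IsPyth A B) (b : Bool) :
    IsPyth (if b then B else A) (if b then A else B) := by
  cases b
  · exact h
  · exact h.symm

lemma inner_add_inner (h : IsPyth A B) (x y : H) :
    ⟪A x, A y⟫_ℂ + ⟪B x, B y⟫_ℂ = ⟪x, y⟫_ℂ := by
  have := congrArg (fun T : H →L[ℂ] H => ⟪T x, y⟫_ℂ) h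
  simpa [inner_add_left, ContinuousLinearMap.adjoint_inner_left] using this

lemma inner_eq_zero_of_apply_eq_zero (h : IsPyth A B) {x y : H} (hx : B x = 0) (hy : A y = 0) :
    ⟪x, y⟫_ℂ = 0 := by
  rw [← h.inner_add_inner, hx, hy, inner_zero_right, inner_zero_left, add_zero]

lemma inner_apply_left_eq (h : IsPyth A B) {x y : H} (hx : B x = 0) (hy : B y = 0) :
    ⟪A x, A y⟫_ℂ = ⟪x, y⟫_ℂ := by
  rw [← h.inner_add_inner x y, hx, hy, inner_zero_left, add_zero]

lemma apply_eq_zero_of_norm_apply_eq (h : IsPyth A B) {x : H} (hx : ‖A x‖ = ‖x‖) : B x = 0 := by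
  have hsq : ‖A x‖ ^ 2 + ‖B x‖ ^ 2 = ‖x‖ ^ 2 := by
    have := h.inner_add_inner x x
    simp only [inner_self_eq_norm_sq_to_K] at this
    exact_mod_cast this
  rw [hx] at hsq
  exact norm_eq_zero.mp (pow_eq_zero_iff two_ne_zero |>.mp (by linarith))

end IsPyth

def PreservesNormAlong (A B : H →L[ℂ] H) (q : ℕ → Bool) (η : H) : Prop :=
  ∀ n, ‖wordAct A B (pre q n) η‖ = ‖η‖

namespace PreservesNormAlong

variable {A B : H →L[ℂ] H} {q : ℕ → Bool} {η : H}

lemma shift (h : PreservesNormAlong A B q η) (m : ℕ) :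
    PreservesNormAlong A B (fun k => q (m + k)) (wordAct A B (pre q m) η) := by
  intro n
  rw [← wordAct_append, ← pre_add, h, h]

lemma apply_eq_zero [CompleteSpace H] (hAB : IsPyth A B) (h : PreservesNormAlong A B q η) :
    (if q 0 then A else B) η = 0 :=
  (hAB.letter (q 0)).apply_eq_zero_of_norm_apply_eq (h 1)

lemma inner_eq_zero_of_head_ne [CompleteSpace H] (hAB : IsPyth A B) {q' : ℕ → Bool} {ζ : H}
    (hη : PreservesNormAlong A B q η) (hζ : PreservesNormAlong A B q' ζ) (h0 : q 0 ≠ q' 0) :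
    ⟪η, ζ⟫_ℂ = 0 := by
  have hη0 := hη.apply_eq_zero hAB
  have hζ0 := hζ.apply_eq_zero hAB
  cases hq0 : q 0 <;> cases hq0' : q' 0 <;> simp [hq0, hq0'] at h0 hη0 hζ0
  · exact hAB.inner_eq_zero_of_apply_eq_zero hη0 hζ0
  · exact hAB.symm.inner_eq_zero_of_apply_eq_zero hη0 hζ0

lemma inner_eq_zero_of_ne [CompleteSpace H] (hAB : IsPyth A B) {q' : ℕ → Bool} {ζ : H}
    (hη : PreservesNormAlong A B q η) (hζ : PreservesNormAlong A B q' ζ) (hq : q ≠ q') :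
    ⟪η, ζ⟫_ℂ = 0 := by
  obtain ⟨n, hn⟩ := Function.ne_iff.mp hq
  clear hq
  induction n generalizing q q' η ζ with
  | zero => exact hη.inner_eq_zero_of_head_ne hAB hζ hn
  | succ n ih =>
    by_cases h0 : q 0 = q' 0
    · have hζ0 := hζ.apply_eq_zero hAB
      rw [← h0] at hζ0
      rw [← (hAB.letter (q 0)).inner_apply_left_eq (hη.apply_eq_zero hAB) hζ0]
      simpa [h0] using ih (hη.shift 1) (hζ.shift 1) (by rwa [add_comm])
    · exact hη.inner_eq_zero_of_head_ne hAB hζ h0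

end PreservesNormAlong

end

lemma periodic_from_of_shift_eq {α : Type*} {p : ℕ → α} {a b : ℕ}
    (h : ∀ k, p (a + k) = p (b + k)) (hab : a ≤ b) : ∀ n ≥ a, p (n + (b - a)) = p n := by
  intro n hn
  obtain ⟨k, rfl⟩ := Nat.exists_eq_add_of_le hn
  rw [show a + k + (b - a) = b + k by omega, h]

theorem stmt5 {H : Type*} [NormedAddCommGroup H] [InnerProductSpace ℂ H]
    [FiniteDimensional ℂ H] (A B : H →L[ℂ] H) (hAB : IsPyth A B)
    (p : ℕ → Bool) (ξ : H) (hξ : ContainedIn A B p ξ) :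
    ∃ d : ℕ, 0 < d ∧ d ≤ Module.finrank ℂ H ∧ ∃ N : ℕ, ∀ n ≥ N, p (n + d) = p n := by
  obtain ⟨hξ0, hξ⟩ := hξ
  have hξ : PreservesNormAlong A B p ξ := hξ
  have hshifts : ¬ Function.Injective
      fun a : Fin (Module.finrank ℂ H + 1) => fun k => p (a + k) := by
    intro hinj
    have hli : LinearIndependent ℂ fun a : Fin (Module.finrank ℂ H + 1) =>
        wordAct A B (pre p a) ξ :=
      linearIndependent_of_ne_zero_of_inner_eq_zero
        (fun a => by rw [← norm_ne_zero_iff, hξ a]; exact norm_ne_zero_iff.mpr hξ0)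
        (fun a b hab => (hξ.shift a).inner_eq_zero_of_ne hAB (hξ.shift b) (hinj.ne hab))
    simpa using hli.fintype_card_le_finrank
  obtain ⟨a, b, hab, hne⟩ := Function.not_injective_iff.mp hshifts
  wlog hlt : a < b generalizing a b
  · exact this b a hab.symm hne.symm (lt_of_le_of_ne (not_lt.mp hlt) hne.symm)
  exact ⟨b - a, by omega, by omega, a, periodic_from_of_shift_eq (congrFun hab) hlt.le⟩
end

section
/- Let (A, B, H) be a P-module and ξ ∈ H a nonzero vector contained in a ray p (i.e., ‖pₙξ‖ = ‖ξ‖ for all n). If the first digit of p is 0, then Aξ is contained in the shifted ray ₁p (obtained by deleting the first digit of p) and Bξ = 0; if the first digit of p is 1, then Bξ is contained in ₁p and Aξ = 0. -/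
open Filter Topology
open scoped InnerProductSpace

/-! Since `‖A ξ‖² + ‖B ξ‖² = ‖ξ‖²`, the first digit of the ray must carry all of `ξ`'s norm
(the length-one prefix preserves it), so the other operator kills `ξ`; the remaining
prefixes of `p` are the prefixes of `₁p` applied after the first digit. -/

section PModule

variable {H : Type*} [NormedAddCommGroup H] [InnerProductSpace ℂ H]

theorem IsPyth.norm_sq_add_norm_sq [CompleteSpace H] {A B : H →L[ℂ] H} (hAB : IsPyth A B)
    (ξ : H) : ‖A ξ‖ ^ 2 + ‖B ξ‖ ^ 2 = ‖ξ‖ ^ 2 := by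
  have h := congrArg (fun T : H →L[ℂ] H => ⟪ξ, T ξ⟫_ℂ) hAB
  simp only [add_apply, ContinuousLinearMap.comp_apply,
    ContinuousLinearMap.id_apply, inner_add_right,
    ContinuousLinearMap.adjoint_inner_right, inner_self_eq_norm_sq_to_K] at h
  exact_mod_cast h

theorem IsPyth.apply_right_eq_zero [CompleteSpace H] {A B : H →L[ℂ] H} (hAB : IsPyth A B)
    {ξ : H} (h : ‖A ξ‖ = ‖ξ‖) : B ξ = 0 := by
  have := hAB.norm_sq_add_norm_sq ξ
  rw [h] at this
  exact norm_eq_zero.mp (pow_eq_zero_iff two_ne_zero |>.mp (by linarith))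

theorem IsPyth.symm_s9 [CompleteSpace H] {A B : H →L[ℂ] H} (hAB : IsPyth A B) : IsPyth B A := by
  rw [IsPyth, add_comm]
  exact hAB

theorem IsPyth.apply_left_eq_zero [CompleteSpace H] {A B : H →L[ℂ] H} (hAB : IsPyth A B)
    {ξ : H} (h : ‖B ξ‖ = ‖ξ‖) : A ξ = 0 :=
  hAB.symm_s9.apply_right_eq_zero h

theorem pre_succ (p : ℕ → Bool) (n : ℕ) :
    pre p (n + 1) = p 0 :: pre (fun k => p (k + 1)) n := by
  simp [pre, List.ofFn_succ]

theorem ContainedIn.norm_apply_first {A B : H →L[ℂ] H} {p : ℕ → Bool} {ξ : H}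
    (hξ : ContainedIn A B p ξ) : ‖(if p 0 then B else A) ξ‖ = ‖ξ‖ := by
  simpa [pre, wordAct] using hξ.2 1

theorem ContainedIn.tail {A B : H →L[ℂ] H} {p : ℕ → Bool} {ξ : H}
    (hξ : ContainedIn A B p ξ) :
    ContainedIn A B (fun n => p (n + 1)) ((if p 0 then B else A) ξ) := by
  refine ⟨fun h0 => hξ.1 (norm_eq_zero.mp ?_), fun n => ?_⟩
  · rw [← hξ.norm_apply_first, h0, norm_zero]
  · rw [hξ.norm_apply_first, ← hξ.2 (n + 1), pre_succ, wordAct]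

end PModule

theorem stmt9 {H : Type*} [NormedAddCommGroup H] [InnerProductSpace ℂ H]
    [CompleteSpace H] (A B : H →L[ℂ] H) (hAB : IsPyth A B)
    (p : ℕ → Bool) (ξ : H) (hξ : ContainedIn A B p ξ) :
    (p 0 = false → ContainedIn A B (fun n => p (n + 1)) (A ξ) ∧ B ξ = 0) ∧
    (p 0 = true → ContainedIn A B (fun n => p (n + 1)) (B ξ) ∧ A ξ = 0) := by
  have htail := hξ.tail
  have hfirst := hξ.norm_apply_first
  constructor
  · intro h0
    simp only [h0, Bool.false_eq_true, if_false] at htail hfirst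
    exact ⟨htail, hAB.apply_right_eq_zero hfirst⟩
  · intro h0
    simp only [h0, if_true] at htail hfirst
    exact ⟨htail, hAB.apply_left_eq_zero hfirst⟩
end
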